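/- arXiv:math/0607753 — 2 statements merged into one kernel-verified Lean document; each statement's English description precedes it below -/
import Mathlib

section
/- Let Z be a measure on S^{n-1} whose support is not contained in any closed hemisphere. If t : S^{n-1} → (0,∞) is continuous with ∫_{S^{n-1}} t dZ = 1, then the vector t° = ∫_{S^{n-1}} u t(u) dZ(u) lies in the interior of the convex hull of the support of Z. -/
/-!
Since `t > 0` and `∫ t dZ = 1`, the point `x = ∫ t(u) u dZ(u)` is a strictly positive average of
the points of `supp Z`. The hemisphere condition says that every nonzero linear functional `f`
takes both signs on `supp Z`; being non-constant there, `f` has its average `f x` strictly below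
its maximum on the compact set `supp Z`. A point that is strictly beaten in this way by every
nonzero functional lies in the interior of the convex hull: the hull is not contained in a
hyperplane, so it has nonempty interior, and a supporting hyperplane through a point outside that
interior would contradict the strict inequality.
-/

open MeasureTheory

/-- The support of a measure on `ℝ^n`. -/
def msupp {n : ℕ} (Z : Measure (EuclideanSpace ℝ (Fin n))) :
    Set (EuclideanSpace ℝ (Fin n)) :=
  {x | ∀ r > (0 : ℝ), Z (Metric.ball x r) ≠ 0}

open Set Metric

lemma msupp_eq_support {n : ℕ} (Z : Measure (EuclideanSpace ℝ (Fin n))) :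
    msupp Z = Z.support := by
  ext x
  simp only [msupp, mem_ofPred_eq, nhds_basis_ball.mem_measureSupport, pos_iff_ne_zero]

lemma Continuous.integrable_of_measure_compl_eq_zero {X F : Type*} [TopologicalSpace X]
    [T2Space X] [MeasurableSpace X] [OpensMeasurableSpace X] [NormedAddCommGroup F]
    {μ : Measure X} [IsFiniteMeasure μ] {K : Set X} (hK : IsCompact K) (hμK : μ Kᶜ = 0)
    {f : X → F} (hf : Continuous f) : Integrable f μ := by
  rw [← Measure.restrict_eq_self_of_ae_mem (mem_ae_iff.2 hμK)]
  exact hf.continuousOn.integrableOn_compact hK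

lemma exists_apply_neg_of_not_subset_halfspace {E : Type*} [NormedAddCommGroup E]
    [InnerProductSpace ℝ E] [CompleteSpace E] {K : Set E}
    (hK : ¬ ∃ v : E, ‖v‖ = 1 ∧ K ⊆ {u | 0 ≤ (inner ℝ v u : ℝ)})
    {f : StrongDual ℝ E} (hf : f ≠ 0) : ∃ u ∈ K, f u < 0 := by
  set v := (InnerProductSpace.toDual ℝ E).symm f
  have hv : v ≠ 0 := by simpa [v] using hf
  by_contra! hfK
  refine hK ⟨‖v‖⁻¹ • v, norm_smul_inv_norm hv, fun u hu => ?_⟩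
  simp only [mem_ofPred_eq, real_inner_smul_left, v, InnerProductSpace.toDual_symm_apply]
  exact mul_nonneg (by positivity) (hfK u hu)

lemma integral_mul_lt_of_ae_le {X : Type*} [TopologicalSpace X] [MeasurableSpace X]
    {μ : Measure X} {t f : X → ℝ} {M : ℝ} {x₀ : X} (htpos : ∀ x, 0 < t x)
    (hti : Integrable t μ) (htfi : Integrable (fun x => t x * f x) μ) (hf : Continuous f)
    (hfM : ∀ᵐ x ∂μ, f x ≤ M) (hx₀ : x₀ ∈ μ.support) (hx₀M : f x₀ < M) :
    ∫ x, t x * f x ∂μ < M * ∫ x, t x ∂μ := by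
  have hgap : 0 < ∫ x, t x * (M - f x) ∂μ := by
    have hnonneg : 0 ≤ᵐ[μ] fun x => t x * (M - f x) := by
      filter_upwards [hfM] with x hx using mul_nonneg (htpos x).le (sub_nonneg.2 hx)
    rw [integral_pos_iff_support_of_nonneg_ae hnonneg ((hti.const_mul M).sub htfi |>.congr
      (.of_forall fun x => by simp only [Pi.sub_apply]; ring))]
    refine lt_of_lt_of_le ((Measure.mem_support_iff_forall x₀).1 hx₀ _
      ((isOpen_lt hf continuous_const).mem_nhds hx₀M)) (measure_mono fun x hx => ?_)
    exact mul_ne_zero (htpos x).ne' (sub_ne_zero.2 hx.ne')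
  have hsplit : ∫ x, t x * (M - f x) ∂μ = M * ∫ x, t x ∂μ - ∫ x, t x * f x ∂μ := by
    rw [← integral_const_mul, ← integral_sub (hti.const_mul M) htfi]
    congr 1 with x
    ring
  linarith

section ConvexHull

variable {E : Type*} [NormedAddCommGroup E] [NormedSpace ℝ E] [FiniteDimensional ℝ E]

lemma exists_ne_zero_apply_eq_of_affineSpan_ne_top {s : Set E} (hs : s.Nonempty)
    (hspan : affineSpan ℝ s ≠ ⊤) :
    ∃ f : StrongDual ℝ E, f ≠ 0 ∧ ∀ y ∈ s, ∀ z ∈ s, f y = f z := by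
  have hdir : (affineSpan ℝ s).direction < ⊤ := by
    rw [lt_top_iff_ne_top, Ne, AffineSubspace.direction_eq_top_iff_of_nonempty
      ((affineSpan_nonempty (k := ℝ)).2 hs)]
    exact hspan
  obtain ⟨g, hg, hker⟩ := (affineSpan ℝ s).direction.exists_le_ker_of_lt_top hdir
  refine ⟨LinearMap.toContinuousLinearMap g, by simpa using hg, fun y hy z hz => ?_⟩
  have hyz : y - z ∈ (affineSpan ℝ s).direction :=
    AffineSubspace.vsub_mem_direction (subset_affineSpan ℝ s hy) (subset_affineSpan ℝ s hz)
  simpa [sub_eq_zero] using hker hyz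

lemma mem_interior_convexHull_of_forall_exists_lt {s : Set E} {x : E} (hs : s.Nonempty)
    (h : ∀ f : StrongDual ℝ E, f ≠ 0 → ∃ y ∈ s, f x < f y) :
    x ∈ interior (convexHull ℝ s) := by
  have hint : (interior (convexHull ℝ s)).Nonempty := by
    rw [interior_convexHull_nonempty_iff_affineSpan_eq_top]
    by_contra hspan
    obtain ⟨f, hf, hconst⟩ := exists_ne_zero_apply_eq_of_affineSpan_ne_top hs hspan
    obtain ⟨y, hy, hxy⟩ := h f hf
    obtain ⟨z, hz, hxz⟩ := h (-f) (neg_ne_zero.2 hf)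
    rw [neg_apply, neg_apply, neg_lt_neg_iff] at hxz
    linarith [hconst y hy z hz]
  by_contra hx
  obtain ⟨f, hf, hmax⟩ :=
    geometric_hahn_banach_of_nonempty_interior_point (convex_convexHull ℝ s) hx hint
  obtain ⟨y, hy, hxy⟩ := h f hf
  exact (hmax y (subset_convexHull ℝ s hy)).not_gt hxy

end ConvexHull

lemma exists_apply_integral_smul_lt {E : Type*} [NormedAddCommGroup E] [NormedSpace ℝ E]
    [CompleteSpace E] [MeasurableSpace E] [HereditarilyLindelofSpace E] {μ : Measure E}
    {t : E → ℝ} (htpos : ∀ x, 0 < t x) (hti : Integrable t μ)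
    (htxi : Integrable (fun x => t x • x) μ) (htone : ∫ x, t x ∂μ = 1)
    (hsupp : IsCompact μ.support) (f : StrongDual ℝ E) {y z : E} (hy : y ∈ μ.support)
    (hz : z ∈ μ.support) (hyz : f y < f z) :
    ∃ w ∈ μ.support, f (∫ x, t x • x ∂μ) < f w := by
  obtain ⟨w, hw, hwmax⟩ := hsupp.exists_isMaxOn ⟨y, hy⟩ f.continuous.continuousOn
  have hfw : ∀ᵐ x ∂μ, f x ≤ f w := by
    filter_upwards [Measure.support_mem_ae] with x hx using hwmax hx
  refine ⟨w, hw, ?_⟩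
  calc f (∫ x, t x • x ∂μ) = ∫ x, t x * f x ∂μ := by
        simp [← f.integral_comp_comm htxi]
    _ < f w * ∫ x, t x ∂μ :=
        integral_mul_lt_of_ae_le htpos hti (by simpa using f.integrable_comp htxi) f.continuous
          hfw hy (hyz.trans_le (hwmax hz))
    _ = f w := by rw [htone, mul_one]

/-- Lemma 2: If the support of `Z` is not contained in a closed
hemisphere and `t > 0` is continuous with `∫ t dZ = 1`, then
`t° = ∫ t(u) u dZ(u)` lies in the interior of the convex hull of the support. -/
theorem vector_integral_mem_interior_hull (n : ℕ)
    (Z : Measure (EuclideanSpace ℝ (Fin n))) [IsFiniteMeasure Z]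
    (hsph : Z (Metric.sphere (0 : EuclideanSpace ℝ (Fin n)) 1)ᶜ = 0)
    (hhemi : ¬ ∃ v : EuclideanSpace ℝ (Fin n), ‖v‖ = 1 ∧
      msupp Z ⊆ {u | 0 ≤ (inner ℝ v u : ℝ)})
    (t : EuclideanSpace ℝ (Fin n) → ℝ) (htc : Continuous t) (htpos : ∀ u, 0 < t u)
    (htone : ∫ u, t u ∂Z = 1) :
    (∫ u, t u • u ∂Z) ∈ interior (convexHull ℝ (msupp Z)) := by
  rw [msupp_eq_support] at hhemi ⊢
  have hZ : Z ≠ 0 := by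
    rintro rfl
    simp at htone
  have hsupp : IsCompact Z.support := (isCompact_sphere 0 1).of_isClosed_subset
    Measure.isClosed_support (Measure.support_subset_of_isClosed isClosed_sphere hsph)
  have hti := htc.integrable_of_measure_compl_eq_zero (isCompact_sphere 0 1) hsph
  have htxi := (htc.smul continuous_id).integrable_of_measure_compl_eq_zero
    (isCompact_sphere 0 1) hsph
  refine mem_interior_convexHull_of_forall_exists_lt (Measure.nonempty_support hZ)
    fun f hf => ?_
  obtain ⟨y, hy, hfy⟩ := exists_apply_neg_of_not_subset_halfspace hhemi hf
  obtain ⟨z, hz, hfz⟩ := exists_apply_neg_of_not_subset_halfspace hhemi (neg_ne_zero.2 hf)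
  rw [neg_apply, neg_neg_iff_pos] at hfz
  exact exists_apply_integral_smul_lt htpos hti htxi htone hsupp f hy hz (hfy.trans hfz)
end

section
/- Let Z be an isotropic measure on S^{n-1} with centroid at the origin (∫ u dZ(u) = 0). Define s : S^{n-1} → S^n ⊂ R^{n+1} by s(u) = (−(√n/√(n+1)) u, 1/√(n+1)), and define the measure Z̄ on S^n by ∫_{S^n} f dZ̄ = ((n+1)/n) ∫_{S^{n-1}} f∘s dZ. Then Z̄ is an isotropic measure on S^n: ∫_{S^n} |y·w|^2 dZ̄(w) = |y|^2 for all y ∈ R^{n+1}. -/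
/-! The map `s` is affine, so `(y · s(u))²` is a quadratic polynomial in `⟪y₁, u⟫`. Integrating
against `Z`, the quadratic term is given by isotropy, the linear term vanishes because the centroid
is the origin, and the constant term is the total mass of `Z`, which equals `n`: summing the
isotropy identity over an orthonormal basis gives `∫ ‖u‖² dZ = n`, and `‖u‖ = 1` on the support. -/

open MeasureTheory Module
open scoped ENNReal RealInnerProductSpace

theorem Continuous.integrable_of_ae_mem_compact {X F : Type*} [TopologicalSpace X] [T2Space X]
    [MeasurableSpace X] [OpensMeasurableSpace X] [NormedAddCommGroup F] {μ : Measure X}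
    [IsFiniteMeasure μ] {K : Set X} (hK : IsCompact K) (hμ : ∀ᵐ x ∂μ, x ∈ K) {f : X → F}
    (hf : Continuous f) : Integrable f μ :=
  Measure.restrict_eq_self_of_ae_mem hμ ▸ hf.continuousOn.integrableOn_compact hK

section Isotropic

variable {E : Type*} [NormedAddCommGroup E] [InnerProductSpace ℝ E] [FiniteDimensional ℝ E]
  [MeasurableSpace E] {μ : Measure E}

theorem integral_norm_sq_eq_finrank_of_isotropic (hiso : ∀ x : E, ∫ u, ⟪x, u⟫ ^ 2 ∂μ = ‖x‖ ^ 2) :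
    ∫ u, ‖u‖ ^ 2 ∂μ = finrank ℝ E := by
  let b := stdOrthonormalBasis ℝ E
  have hint : ∀ i, Integrable (fun u ↦ ⟪b i, u⟫ ^ 2) μ := fun i ↦
    Integrable.of_integral_ne_zero (by simp [hiso])
  simp_rw [← b.sum_sq_inner_right]
  rw [integral_finsetSum _ fun i _ ↦ hint i]
  simp only [hiso, b.norm_eq_one, one_pow, Finset.sum_const, Finset.card_univ, Fintype.card_fin,
    nsmul_eq_mul, mul_one]

theorem measureReal_univ_eq_finrank_of_isotropic (hsph : ∀ᵐ u ∂μ, u ∈ Metric.sphere (0 : E) 1)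
    (hiso : ∀ x : E, ∫ u, ⟪x, u⟫ ^ 2 ∂μ = ‖x‖ ^ 2) : μ.real Set.univ = finrank ℝ E := by
  calc μ.real Set.univ = ∫ _, (1 : ℝ) ∂μ := by simp
    _ = ∫ u, ‖u‖ ^ 2 ∂μ := integral_congr_ae <| by
      filter_upwards [hsph] with u hu
      simp [mem_sphere_zero_iff_norm.1 hu]
    _ = finrank ℝ E := integral_norm_sq_eq_finrank_of_isotropic hiso

variable [BorelSpace E] [IsFiniteMeasure μ]

theorem integral_mul_inner_add_sq_of_isotropic (hsph : ∀ᵐ u ∂μ, u ∈ Metric.sphere (0 : E) 1)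
    (hiso : ∀ x : E, ∫ u, ⟪x, u⟫ ^ 2 ∂μ = ‖x‖ ^ 2) (hcent : ∫ u, u ∂μ = 0) (x : E) (a c : ℝ) :
    ∫ u, (a * ⟪x, u⟫ + c) ^ 2 ∂μ = a ^ 2 * ‖x‖ ^ 2 + c ^ 2 * finrank ℝ E := by
  have hint {f : E → ℝ} (hf : Continuous f) : Integrable f μ :=
    hf.integrable_of_ae_mem_compact (isCompact_sphere 0 1) hsph
  have hlin : ∫ u, ⟪x, u⟫ ∂μ = 0 := by
    rw [integral_inner (𝕜 := ℝ) (f := fun u ↦ u)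
      (continuous_id.integrable_of_ae_mem_compact (isCompact_sphere 0 1) hsph), hcent,
      inner_zero_right]
  calc ∫ u, (a * ⟪x, u⟫ + c) ^ 2 ∂μ
      = ∫ u, (a ^ 2 * ⟪x, u⟫ ^ 2 + 2 * a * c * ⟪x, u⟫ + c ^ 2) ∂μ := by
        congr with u; ring
    _ = a ^ 2 * ∫ u, ⟪x, u⟫ ^ 2 ∂μ + 2 * a * c * ∫ u, ⟪x, u⟫ ∂μ + c ^ 2 * μ.real Set.univ := by
        rw [integral_add (hint (by fun_prop)) (integrable_const _),
          integral_add (hint (by fun_prop)) (hint (by fun_prop)),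
          integral_const_mul, integral_const_mul, integral_const, smul_eq_mul]
        ring
    _ = a ^ 2 * ‖x‖ ^ 2 + c ^ 2 * finrank ℝ E := by
        rw [hiso, hlin, measureReal_univ_eq_finrank_of_isotropic hsph hiso]; ring

end Isotropic

/-- The lift `Z̄` of an isotropic measure `Z` on `S^{n-1}` with centroid at
the origin, obtained by pushing `Z` forward under
`s(u) = (−(√n/√(n+1)) u, 1/√(n+1))` and rescaling by `(n+1)/n`, is an isotropic
measure on `S^n ⊂ ℝ^{n+1} = ℝ^n × ℝ`. -/
theorem lifted_measure_isotropic (n : ℕ) (hn : 0 < n)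
    (Z : Measure (EuclideanSpace ℝ (Fin n))) [IsFiniteMeasure Z]
    (hsph : Z (Metric.sphere (0 : EuclideanSpace ℝ (Fin n)) 1)ᶜ = 0)
    (hiso : ∀ x : EuclideanSpace ℝ (Fin n),
      ∫ u, (inner ℝ x u : ℝ) ^ 2 ∂Z = ‖x‖ ^ 2)
    (hcent : ∫ u, u ∂Z = (0 : EuclideanSpace ℝ (Fin n)))
    (s : EuclideanSpace ℝ (Fin n) → EuclideanSpace ℝ (Fin n) × ℝ)
    (hs : ∀ u, s u = (-(Real.sqrt n / Real.sqrt (n + 1)) • u, 1 / Real.sqrt (n + 1)))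
    (Zbar : Measure (EuclideanSpace ℝ (Fin n) × ℝ))
    (hZbar : Zbar = (((n : ℝ≥0∞) + 1) / n) • Z.map s) :
    ∀ y : EuclideanSpace ℝ (Fin n) × ℝ,
      ∫ w, ((inner ℝ y.1 w.1 : ℝ) + y.2 * w.2) ^ 2 ∂Zbar = ‖y.1‖ ^ 2 + y.2 ^ 2 := by
  intro y
  obtain rfl := funext hs
  subst hZbar
  rw [integral_smul_measure, integral_map (by fun_prop) (by fun_prop)]
  simp only [real_inner_smul_right, ← mul_div_assoc, mul_one]
  rw [integral_mul_inner_add_sq_of_isotropic (mem_ae_iff.2 hsph) hiso hcent,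
    finrank_euclideanSpace_fin]
  have hn' : (0 : ℝ) < n := Nat.cast_pos.2 hn
  have hscale : (((n : ℝ≥0∞) + 1) / n).toReal = (n + 1) / n := by
    rw [ENNReal.toReal_div, ENNReal.toReal_add (by simp) (by simp)]
    simp
  have hsqrt : Real.sqrt (n + 1) ^ 2 = n + 1 := Real.sq_sqrt (by positivity)
  simp only [hscale, smul_eq_mul, neg_sq, div_pow, Real.sq_sqrt hn'.le, hsqrt]
  field_simp
end
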